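/- With s*_λ defined as the ratio of determinants s*_λ(x₁,…,x_n) = det[(x_i+n−i)_{λ_j+n−j}] / det[(x_i+n−i)_{n−j}], for every partition λ with λ₁ ≤ n one has s*_λ(λ₁,…,λ_n) = ∏_{x ∈ F_λ} h(x), the hook number H(λ) of λ. -/

import Mathlib

/-- The falling factorial `(z)_p = z(z−1)⋯(z−p+1)`. -/
noncomputable def ffc (z : ℂ) (p : ℕ) : ℂ := ∏ t ∈ Finset.range p, (z - t)

/-- The conjugate (transpose) partition (0-indexed). -/
noncomputable def conjP (n : ℕ) (lam : ℕ → ℕ) (j : ℕ) : ℕ :=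
  ((Finset.range n).filter (fun i => j + 1 ≤ lam i)).card

open Finset

lemma ffc_nat_lt (m p : ℕ) (h : m < p) : ffc (m : ℂ) p = 0 :=
  Finset.prod_eq_zero (Finset.mem_range.2 h) (by simp)

lemma prod_range_sub_self (M : ℕ) : ∏ m ∈ Finset.range M, (M - m) = Nat.factorial M := by
  rw [← Finset.prod_range_reflect, ← Finset.prod_range_add_one_eq_factorial]
  exact Finset.prod_congr rfl fun j hj => by rw [Finset.mem_range] at hj; omega

lemma ffc_nat_self (m : ℕ) : ffc (m : ℂ) m = ((Nat.factorial m : ℕ) : ℂ) := by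
  rw [← prod_range_sub_self m, Nat.cast_prod]
  exact Finset.prod_congr rfl fun t ht => by
    rw [mem_range] at ht; rw [Nat.cast_sub ht.le]

lemma ffc_eq_eval (z : ℂ) (p : ℕ) : ffc z p = (descPochhammer ℂ p).eval z := by
  induction p with
  | zero => simp [ffc]
  | succ p ih => rw [descPochhammer_succ_eval, ← ih, ffc, ffc, Finset.prod_range_succ]

lemma prod_Ioi_rev {M : Type*} [CommMonoid M] {n : ℕ} (f : Fin n → Fin n → M) :
    (∏ i : Fin n, ∏ j ∈ Finset.Ioi i, f j.rev i.rev) = ∏ i : Fin n, ∏ j ∈ Finset.Ioi i, f i j := by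
  rw [Finset.prod_sigma', Finset.prod_sigma']
  refine Finset.prod_nbij' (fun p => ⟨p.2.rev, p.1.rev⟩) (fun p => ⟨p.2.rev, p.1.rev⟩)
    ?_ ?_ ?_ ?_ ?_ <;> simp [Fin.rev_lt_rev]

lemma prod_Ioi_val {M : Type*} [CommMonoid M] {n : ℕ} (f : ℕ → ℕ → M) :
    (∏ i : Fin n, ∏ j ∈ Finset.Ioi i, f i j) = ∏ i ∈ Finset.range n, ∏ j ∈ Finset.Ioo i n, f i j := by
  rw [← Fin.prod_univ_eq_prod_range]
  refine Finset.prod_congr rfl fun i _ => ?_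
  have h : Finset.Ioo (i : ℕ) n = Finset.Ioc (i : ℕ) (n - 1) := by
    ext x; simp only [mem_Ioo, mem_Ioc]; have := i.2; omega
  rw [← Fin.map_valEmbedding_Ioi, Finset.prod_map]
  rfl

/-- `μ i = λ i + (n - 1 - i)`, the shifted partition entries. -/
def mmu (n : ℕ) (lam : ℕ → ℕ) (i : ℕ) : ℕ := lam i + (n - 1 - i)

section
variable (n : ℕ) (lam : ℕ → ℕ)

lemma conjP_le_n (j : ℕ) : conjP n lam j ≤ n :=
  (Finset.card_filter_le _ _).trans (by simp)

lemma conjP_anti {j k : ℕ} (hjk : j ≤ k) : conjP n lam k ≤ conjP n lam j := by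
  apply Finset.card_le_card
  intro x hx
  rw [mem_filter] at hx ⊢
  exact ⟨hx.1, by omega⟩

variable {n lam} (hl : Antitone lam)
include hl

lemma lt_conjP {i j : ℕ} (hi : i < n) (hj : j + 1 ≤ lam i) : i < conjP n lam j := by
  have hsub : Finset.range (i + 1) ⊆ (Finset.range n).filter (fun x => j + 1 ≤ lam x) := by
    intro x hx
    rw [mem_range] at hx
    rw [mem_filter, mem_range]
    exact ⟨by omega, le_trans hj (hl (by omega))⟩
  have := Finset.card_le_card hsub
  rw [Finset.card_range] at this
  unfold conjP
  omega

lemma conjP_le {k j : ℕ} (hj : lam k ≤ j) : conjP n lam j ≤ k := by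
  have hsub : (Finset.range n).filter (fun x => j + 1 ≤ lam x) ⊆ Finset.range k := by
    intro x hx
    rw [mem_filter, mem_range] at hx
    rw [mem_range]
    by_contra h
    have := hl (le_of_not_gt h)
    omega
  have := Finset.card_le_card hsub
  rw [Finset.card_range] at this
  exact this

lemma mmu_lt {i k : ℕ} (hik : i < k) (hk : k < n) : mmu n lam k < mmu n lam i := by
  have := hl hik.le
  unfold mmu
  omega

lemma row_eq (i : ℕ) (hi : i < n) :
    Nat.factorial (mmu n lam i) =
      (∏ j ∈ Finset.range (lam i), (lam i + conjP n lam j - (i + j + 1))) *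
      ∏ k ∈ Finset.Ioo i n, (mmu n lam i - mmu n lam k) := by
  classical
  have hc_le : ∀ j, conjP n lam j ≤ n := conjP_le_n n lam
  have hμinj : ∀ a ∈ Finset.Ioo i n, ∀ b ∈ Finset.Ioo i n,
      mmu n lam a = mmu n lam b → a = b := by
    intro a ha b hb hab
    rw [mem_Ioo] at ha hb
    rcases lt_trichotomy a b with h | h | h
    · have := mmu_lt hl h hb.2; omega
    · exact h
    · have := mmu_lt hl h ha.2; omega
  have hψinj : ∀ a ∈ Finset.range (lam i), ∀ b ∈ Finset.range (lam i),
      n + a - conjP n lam a = n + b - conjP n lam b → a = b := by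
    intro a _ b _ hab
    have h1 := hc_le a
    have h2 := hc_le b
    rcases le_or_gt a b with h | h
    · have := conjP_anti n lam h; omega
    · have := conjP_anti n lam h.le; omega
  have hsubA : (Finset.Ioo i n).image (mmu n lam) ⊆ Finset.range (mmu n lam i) := by
    intro a ha
    rw [Finset.mem_image] at ha
    obtain ⟨k, hk, rfl⟩ := ha
    rw [mem_Ioo] at hk
    exact Finset.mem_range.2 (mmu_lt hl hk.1 hk.2)
  have hsubB : (Finset.range (lam i)).image (fun j => n + j - conjP n lam j)
      ⊆ Finset.range (mmu n lam i) := by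
    intro a ha
    rw [Finset.mem_image] at ha
    obtain ⟨j, hj, rfl⟩ := ha
    rw [mem_range] at hj
    have h1 := lt_conjP hl hi hj
    have h2 := hc_le j
    rw [Finset.mem_range]
    unfold mmu
    omega
  have hdisj : Disjoint ((Finset.Ioo i n).image (mmu n lam))
      ((Finset.range (lam i)).image (fun j => n + j - conjP n lam j)) := by
    rw [Finset.disjoint_left]
    intro a haA haB
    rw [Finset.mem_image] at haA haB
    obtain ⟨k, hk, rfl⟩ := haA
    obtain ⟨j, hj, hkj⟩ := haB
    rw [mem_Ioo] at hk
    rw [mem_range] at hj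
    unfold mmu at hkj
    rcases le_or_gt (lam k) j with h | h
    · have := @conjP_le n lam hl k j h
      omega
    · have := lt_conjP hl hk.2 h
      have := hc_le j
      omega
  have hcardA : ((Finset.Ioo i n).image (mmu n lam)).card = n - 1 - i := by
    rw [Finset.card_image_of_injOn fun a ha b hb h => hμinj a ha b hb h, Nat.card_Ioo]
    omega
  have hcardB : ((Finset.range (lam i)).image (fun j => n + j - conjP n lam j)).card
      = lam i := by
    rw [Finset.card_image_of_injOn fun a ha b hb h => hψinj a ha b hb h, Finset.card_range]
  have hunion : (Finset.Ioo i n).image (mmu n lam)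
      ∪ (Finset.range (lam i)).image (fun j => n + j - conjP n lam j)
      = Finset.range (mmu n lam i) := by
    apply Finset.eq_of_subset_of_card_le (Finset.union_subset hsubA hsubB)
    rw [Finset.card_union_of_disjoint hdisj, Finset.card_range, hcardA, hcardB]
    unfold mmu
    omega
  have key : Nat.factorial (mmu n lam i) = ∏ m ∈ (Finset.Ioo i n).image (mmu n lam)
      ∪ (Finset.range (lam i)).image (fun j => n + j - conjP n lam j), (mmu n lam i - m) := by
    rw [hunion, prod_range_sub_self]
  rw [key, Finset.prod_union hdisj, mul_comm]
  congr 1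
  · rw [Finset.prod_image hψinj]
    refine Finset.prod_congr rfl fun j hj => ?_
    rw [mem_range] at hj
    have h1 := lt_conjP hl hi hj
    have h2 := hc_le j
    unfold mmu
    omega
  · rw [Finset.prod_image hμinj]

lemma global_eq (hn : ∀ i, lam i ≤ n) :
    ∏ i ∈ Finset.range n, Nat.factorial (mmu n lam i) =
      (∏ p ∈ (Finset.range n ×ˢ Finset.range n).filter (fun p : ℕ × ℕ => p.2 < lam p.1),
        ((lam p.1 + conjP n lam p.2) - (p.1 + p.2 + 1))) *
      ∏ i ∈ Finset.range n, ∏ k ∈ Finset.Ioo i n, (mmu n lam i - mmu n lam k) := by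
  classical
  have hfil : (∏ p ∈ (Finset.range n ×ˢ Finset.range n).filter
        (fun p : ℕ × ℕ => p.2 < lam p.1), ((lam p.1 + conjP n lam p.2) - (p.1 + p.2 + 1)))
      = ∏ i ∈ Finset.range n, ∏ j ∈ Finset.range (lam i),
        (lam i + conjP n lam j - (i + j + 1)) := by
    rw [Finset.prod_filter, Finset.prod_product]
    refine Finset.prod_congr rfl fun i _ => ?_
    rw [← Finset.prod_filter]
    congr 1
    ext x
    simp only [mem_filter, mem_range]
    exact ⟨fun h => h.2, fun h => ⟨lt_of_lt_of_le h (hn i), h⟩⟩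
  rw [hfil, ← Finset.prod_mul_distrib]
  exact Finset.prod_congr rfl fun i hi => row_eq hl i (Finset.mem_range.1 hi)

end

/-- `s*_λ(λ₁,…,λₙ) = H(λ)`, the hook number of `λ`: the shifted Schur polynomial,
given as a ratio of determinants, evaluated at `λ` itself, equals the product of all
the hook lengths of the Ferrers diagram of `λ`. -/
theorem stmt14 (n : ℕ) (lam : ℕ → ℕ) (hl : Antitone lam)
    (hl1 : lam 0 ≤ n) (hlvan : ∀ i, n ≤ i → lam i = 0) :
    Matrix.det (Matrix.of fun i j : Fin n =>
        ffc ((lam (i : ℕ) : ℂ) + (n : ℂ) - 1 - ((i : ℕ) : ℂ)) (lam (j : ℕ) + (n - 1 - (j : ℕ))))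
      / Matrix.det (Matrix.of fun i j : Fin n =>
        ffc ((lam (i : ℕ) : ℂ) + (n : ℂ) - 1 - ((i : ℕ) : ℂ)) (n - 1 - (j : ℕ)))
      = ((∏ p ∈ (Finset.range n ×ˢ Finset.range n).filter
            (fun p : ℕ × ℕ => p.2 < lam p.1),
          ((lam p.1 + conjP n lam p.2) - (p.1 + p.2 + 1)) : ℕ) : ℂ) := by
  classical
  have hlam_le : ∀ i, lam i ≤ n := fun i => le_trans (hl (Nat.zero_le i)) hl1
  have hbase : ∀ i : Fin n,
      (lam (i : ℕ) : ℂ) + (n : ℂ) - 1 - ((i : ℕ) : ℂ) = ((mmu n lam i : ℕ) : ℂ) := by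
    intro i
    have hi : (i : ℕ) < n := i.2
    have h1 : mmu n lam i = lam i + (n - (1 + i)) := by unfold mmu; omega
    rw [h1, Nat.cast_add, Nat.cast_sub (by omega), Nat.cast_add, Nat.cast_one]
    ring
  have hnum : Matrix.det (Matrix.of fun i j : Fin n =>
      ffc ((lam (i : ℕ) : ℂ) + (n : ℂ) - 1 - ((i : ℕ) : ℂ)) (lam (j : ℕ) + (n - 1 - (j : ℕ))))
      = ((∏ i ∈ Finset.range n, Nat.factorial (mmu n lam i) : ℕ) : ℂ) := by
    have hM : (Matrix.of fun i j : Fin n =>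
        ffc ((lam (i : ℕ) : ℂ) + (n : ℂ) - 1 - ((i : ℕ) : ℂ)) (lam (j : ℕ) + (n - 1 - (j : ℕ))))
        = Matrix.of fun i j : Fin n => ffc ((mmu n lam i : ℕ) : ℂ) (mmu n lam j) := by
      ext i j
      rw [Matrix.of_apply, Matrix.of_apply, hbase]
      rfl
    rw [hM, Matrix.det_of_upperTriangular (by
      intro i j hji
      exact ffc_nat_lt _ _ (mmu_lt hl hji i.2))]
    rw [Nat.cast_prod, ← Fin.prod_univ_eq_prod_range]
    exact Finset.prod_congr rfl fun i _ => ffc_nat_self _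
  have hden : Matrix.det (Matrix.of fun i j : Fin n =>
      ffc ((lam (i : ℕ) : ℂ) + (n : ℂ) - 1 - ((i : ℕ) : ℂ)) (n - 1 - (j : ℕ)))
      = ((∏ i ∈ Finset.range n, ∏ k ∈ Finset.Ioo i n, (mmu n lam i - mmu n lam k) : ℕ) : ℂ) := by
    have hD : (Matrix.of fun i j : Fin n =>
        ffc ((lam (i : ℕ) : ℂ) + (n : ℂ) - 1 - ((i : ℕ) : ℂ)) (n - 1 - (j : ℕ)))
        = (Matrix.of fun i j : Fin n =>
            ((descPochhammer ℂ ((j : ℕ))).eval ((mmu n lam (Fin.rev i) : ℕ) : ℂ))).submatrix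
            Fin.revPerm Fin.revPerm := by
      ext i j
      rw [Matrix.submatrix_apply, Matrix.of_apply, Matrix.of_apply, hbase, ffc_eq_eval]
      have h1 : ((Fin.revPerm j : Fin n) : ℕ) = n - 1 - (j : ℕ) := by
        have := j.2
        rw [show (Fin.revPerm j : Fin n) = Fin.rev j from rfl, Fin.val_rev]
        omega
      have h2 : Fin.rev (Fin.revPerm i) = i := Fin.rev_rev i
      rw [h1, h2]
    rw [hD, Matrix.det_submatrix_equiv_self,
      ← Matrix.det_eval_matrixOfPolynomials_eq_det_vandermonde
        (fun i : Fin n => ((mmu n lam (Fin.rev i) : ℕ) : ℂ))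
        (fun j : Fin n => descPochhammer ℂ (j : ℕ))
        (fun j => descPochhammer_natDegree ℂ _) (fun j => monic_descPochhammer ℂ _),
      Matrix.det_vandermonde]
    have hstep : ∀ i : Fin n, ∀ j ∈ Finset.Ioi i,
        ((mmu n lam (Fin.rev j) : ℕ) : ℂ) - ((mmu n lam (Fin.rev i) : ℕ) : ℂ)
        = (((mmu n lam (Fin.rev j) - mmu n lam (Fin.rev i) : ℕ)) : ℂ) := by
      intro i j hj
      rw [Finset.mem_Ioi] at hj
      have hrev : Fin.rev j < Fin.rev i := Fin.rev_lt_rev.2 hj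
      have hle : mmu n lam (Fin.rev i) ≤ mmu n lam (Fin.rev j) :=
        (mmu_lt hl hrev (Fin.rev i).2).le
      rw [Nat.cast_sub hle]
    calc (∏ i : Fin n, ∏ j ∈ Finset.Ioi i,
          (((mmu n lam (Fin.rev j) : ℕ) : ℂ) - ((mmu n lam (Fin.rev i) : ℕ) : ℂ)))
        = ∏ i : Fin n, ∏ j ∈ Finset.Ioi i,
          (((mmu n lam (Fin.rev j) - mmu n lam (Fin.rev i) : ℕ)) : ℂ) :=
          Finset.prod_congr rfl fun i _ => Finset.prod_congr rfl fun j hj => hstep i j hj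
      _ = (((∏ i : Fin n, ∏ j ∈ Finset.Ioi i,
          (mmu n lam (Fin.rev j) - mmu n lam (Fin.rev i)) : ℕ)) : ℂ) := by
          rw [Nat.cast_prod]
          exact Finset.prod_congr rfl fun i _ => (Nat.cast_prod _ _).symm
      _ = _ := by
          rw [prod_Ioi_rev (f := fun a b : Fin n => mmu n lam a - mmu n lam b),
            prod_Ioi_val (f := fun a b : ℕ => mmu n lam a - mmu n lam b)]
  have hPpos : 0 < ∏ i ∈ Finset.range n, ∏ k ∈ Finset.Ioo i n, (mmu n lam i - mmu n lam k) :=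
    Finset.prod_pos fun i hi => Finset.prod_pos fun k hk => by
      rw [Finset.mem_Ioo] at hk
      have := mmu_lt hl hk.1 hk.2
      omega
  have hPne : ((∏ i ∈ Finset.range n, ∏ k ∈ Finset.Ioo i n,
      (mmu n lam i - mmu n lam k) : ℕ) : ℂ) ≠ 0 := by
    rw [Nat.cast_ne_zero]
    omega
  rw [hnum, hden, div_eq_iff hPne, ← Nat.cast_mul, global_eq hl hlam_le]
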